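/- arXiv:2404.09796 — 10 statements merged into one kernel-verified Lean document; each statement's English description precedes it below -/
import Mathlib

section
/- Let σ > 1 and φ ∈ (0,1). The function f is strictly increasing on the interval [φ^{1/σ}, φ^{−1/σ}] and maps this interval bijectively onto [0,1]. Consequently there exists a unique strictly increasing function w : [0,1] → [φ^{1/σ}, φ^{−1/σ}] such that f(w(h)) = h for every h ∈ [0,1] (the short-run equilibrium relative nominal wage, which is strictly increasing in the population share h of region L). -/
/-!
Write `f = N / (N + M)` with `N w = w^σ - φ` and `M w = w (w^{-σ} - φ) = w^{1-σ} - φ w`. For `σ > 1`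
the numerator `N` is strictly increasing and `M` strictly decreasing, and on `[φ^{1/σ}, φ^{-1/σ}]`
both are nonnegative, `N` vanishing at the left endpoint and `M` at the right one. Such a quotient
is strictly increasing, and it runs from `0` to `1`; continuity and the intermediate value theorem
make it a bijection onto `[0, 1]`, whose inverse is the equilibrium wage.
-/

/-- The short-run wage-equation function of the two-region model:
`f σ φ w = (w^σ − φ)/((w^σ − φ) + w·(w^{−σ} − φ))`, with real powers. -/
noncomputable def wageEq (σ φ w : ℝ) : ℝ :=
  (w ^ σ - φ) / ((w ^ σ - φ) + w * (w ^ (-σ) - φ))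

open Set Real

theorem StrictMonoOn.div_add_of_strictAntiOn {α 𝕜 : Type*} [Preorder α] [Field 𝕜] [LinearOrder 𝕜]
    [IsStrictOrderedRing 𝕜] {s : Set α} {N M : α → 𝕜} (hN : StrictMonoOn N s)
    (hM : StrictAntiOn M s) (hN0 : ∀ x ∈ s, 0 ≤ N x) (hM0 : ∀ x ∈ s, 0 ≤ M x) :
    StrictMonoOn (fun x => N x / (N x + M x)) s := by
  intro x hx y hy hxy
  have hNxy := hN hx hy hxy
  have hMxy := hM hx hy hxy
  have hNx := hN0 x hx
  have hMy := hM0 y hy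
  -- cross-multiplied: `N x * M y ≤ N x * M x < N y * M x`
  rw [div_lt_div_iff₀ (by linarith) (by linarith)]
  nlinarith [mul_pos (sub_pos.2 hNxy) (hMy.trans_lt hMxy), mul_nonneg hNx (sub_pos.2 hMxy).le]

theorem StrictMonoOn.bijOn_Icc_of_continuousOn {α δ : Type*} [ConditionallyCompleteLinearOrder α]
    [TopologicalSpace α] [OrderTopology α] [DenselyOrdered α] [LinearOrder δ] [TopologicalSpace δ]
    [OrderClosedTopology δ] {f : α → δ} {a b : α} (hf : StrictMonoOn f (Icc a b))
    (hc : ContinuousOn f (Icc a b)) (hab : a ≤ b) : BijOn f (Icc a b) (Icc (f a) (f b)) :=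
  ⟨hf.monotoneOn.mapsTo_Icc, hf.injOn, hc.surjOn_Icc (left_mem_Icc.2 hab) (right_mem_Icc.2 hab)⟩

theorem StrictMonoOn.existsUnique_strictMono_rightInvOn {α β : Type*} [LinearOrder α] [Preorder β]
    {f : α → β} {s : Set α} {t : Set β} (hf : StrictMonoOn f s) (hst : SurjOn f s t) :
    ∃! g : t → α, StrictMono g ∧ ∀ y : t, g y ∈ s ∧ f (g y) = y := by
  choose g hgs hfg using fun y : t => hst y.2
  refine ⟨g, ⟨fun y z hyz => ?_, fun y => ⟨hgs y, hfg y⟩⟩, ?_⟩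
  · rwa [← hf.lt_iff_lt (hgs y) (hgs z), hfg, hfg]
  · rintro g' ⟨-, hg'⟩
    funext y
    exact hf.injOn (hg' y).1 (hgs y) ((hg' y).2.trans (hfg y).symm)

section WageEquation

variable {σ φ x : ℝ}

noncomputable def wageEqNum (σ φ w : ℝ) : ℝ := w ^ σ - φ

noncomputable def wageEqRest (σ φ w : ℝ) : ℝ := w * (w ^ (-σ) - φ)

theorem wageEq_eq_div_add :
    wageEq σ φ = fun w => wageEqNum σ φ w / (wageEqNum σ φ w + wageEqRest σ φ w) :=
  rfl

theorem wageEqNum_strictMonoOn (hσ : 0 < σ) : StrictMonoOn (wageEqNum σ φ) (Ici 0) :=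
  fun _ hx _ _ hxy => sub_lt_sub_right (rpow_lt_rpow hx hxy hσ) φ

theorem wageEqRest_eq_sub (hx : 0 < x) : wageEqRest σ φ x = x ^ (1 - σ) - φ * x := by
  rw [wageEqRest, sub_eq_add_neg 1 σ, rpow_add hx, rpow_one]
  ring

theorem wageEqRest_strictAntiOn (hσ : 1 < σ) (hφ : 0 ≤ φ) :
    StrictAntiOn (wageEqRest σ φ) (Ioi 0) := by
  intro x hx y hy hxy
  rw [wageEqRest_eq_sub hx, wageEqRest_eq_sub hy]
  have := rpow_lt_rpow_of_neg hx hxy (by linarith : 1 - σ < 0)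
  nlinarith

theorem wageEqNum_rpow_one_div (hσ : σ ≠ 0) (hφ : 0 ≤ φ) : wageEqNum σ φ (φ ^ (1 / σ)) = 0 := by
  rw [wageEqNum, one_div, rpow_inv_rpow hφ hσ, sub_self]

theorem wageEqRest_rpow_neg_one_div (hσ : σ ≠ 0) (hφ : 0 ≤ φ) :
    wageEqRest σ φ (φ ^ (-(1 / σ))) = 0 := by
  rw [wageEqRest, ← rpow_mul hφ, neg_mul_neg, one_div_mul_cancel hσ, rpow_one, sub_self, mul_zero]

theorem rpow_one_div_lt_rpow_neg_one_div (hσ : 0 < σ) (hφ : φ ∈ Ioo 0 1) :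
    φ ^ (1 / σ) < φ ^ (-(1 / σ)) :=
  rpow_lt_rpow_of_exponent_gt hφ.1 hφ.2 (neg_lt_self (one_div_pos.2 hσ))

theorem wageEqNum_nonneg (hσ : 0 < σ) (hφ : 0 ≤ φ) (hx : φ ^ (1 / σ) ≤ x) :
    0 ≤ wageEqNum σ φ x := by
  have ha : (0 : ℝ) ≤ φ ^ (1 / σ) := rpow_nonneg hφ _
  simpa only [wageEqNum_rpow_one_div hσ.ne' hφ] using
    (wageEqNum_strictMonoOn (φ := φ) hσ).monotoneOn ha (ha.trans hx) hx

theorem wageEqNum_pos (hσ : 0 < σ) (hφ : 0 ≤ φ) (hx : φ ^ (1 / σ) < x) :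
    0 < wageEqNum σ φ x := by
  have ha : (0 : ℝ) ≤ φ ^ (1 / σ) := rpow_nonneg hφ _
  simpa only [wageEqNum_rpow_one_div hσ.ne' hφ] using
    wageEqNum_strictMonoOn (φ := φ) hσ ha (ha.trans hx.le) hx

theorem wageEqRest_nonneg (hσ : 1 < σ) (hφ : 0 < φ) (hx : 0 < x) (hxb : x ≤ φ ^ (-(1 / σ))) :
    0 ≤ wageEqRest σ φ x := by
  simpa only [wageEqRest_rpow_neg_one_div (zero_lt_one.trans hσ).ne' hφ.le] using
    (wageEqRest_strictAntiOn hσ hφ.le).antitoneOn hx (hx.trans_le hxb) hxb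

theorem wageEqRest_pos (hσ : 1 < σ) (hφ : 0 < φ) (hx : 0 < x) (hxb : x < φ ^ (-(1 / σ))) :
    0 < wageEqRest σ φ x := by
  simpa only [wageEqRest_rpow_neg_one_div (zero_lt_one.trans hσ).ne' hφ.le] using
    wageEqRest_strictAntiOn hσ hφ.le hx (hx.trans hxb) hxb

theorem wageEq_rpow_one_div (hσ : σ ≠ 0) (hφ : 0 ≤ φ) : wageEq σ φ (φ ^ (1 / σ)) = 0 := by
  simp only [wageEq_eq_div_add, wageEqNum_rpow_one_div hσ hφ, zero_div]

theorem wageEq_rpow_neg_one_div (hσ : 0 < σ) (hφ : φ ∈ Ioo 0 1) :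
    wageEq σ φ (φ ^ (-(1 / σ))) = 1 := by
  have hN := wageEqNum_pos hσ hφ.1.le (rpow_one_div_lt_rpow_neg_one_div hσ hφ)
  simp only [wageEq_eq_div_add, wageEqRest_rpow_neg_one_div hσ.ne' hφ.1.le, add_zero,
    div_self hN.ne']

theorem wageEq_strictMonoOn (hσ : 1 < σ) (hφ : φ ∈ Ioo 0 1) :
    StrictMonoOn (wageEq σ φ) (Icc (φ ^ (1 / σ)) (φ ^ (-(1 / σ)))) := by
  have hσ0 : 0 < σ := zero_lt_one.trans hσ
  have hpos : ∀ x ∈ Icc (φ ^ (1 / σ)) (φ ^ (-(1 / σ))), 0 < x :=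
    fun x hx => (rpow_pos_of_pos hφ.1 _).trans_le hx.1
  rw [wageEq_eq_div_add]
  exact StrictMonoOn.div_add_of_strictAntiOn
    ((wageEqNum_strictMonoOn hσ0).mono fun x hx => (hpos x hx).le)
    ((wageEqRest_strictAntiOn hσ hφ.1.le).mono hpos)
    (fun x hx => wageEqNum_nonneg hσ0 hφ.1.le hx.1)
    (fun x hx => wageEqRest_nonneg hσ hφ.1 (hpos x hx) hx.2)

theorem wageEqNum_add_wageEqRest_pos (hσ : 1 < σ) (hφ : φ ∈ Ioo 0 1)
    (hx : x ∈ Icc (φ ^ (1 / σ)) (φ ^ (-(1 / σ)))) : 0 < wageEqNum σ φ x + wageEqRest σ φ x := by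
  have hσ0 : 0 < σ := zero_lt_one.trans hσ
  have hx0 : 0 < x := (rpow_pos_of_pos hφ.1 _).trans_le hx.1
  rcases hx.2.lt_or_eq with hxb | rfl
  · exact add_pos_of_nonneg_of_pos (wageEqNum_nonneg hσ0 hφ.1.le hx.1)
      (wageEqRest_pos hσ hφ.1 hx0 hxb)
  · exact add_pos_of_pos_of_nonneg
      (wageEqNum_pos hσ0 hφ.1.le (rpow_one_div_lt_rpow_neg_one_div hσ0 hφ))
      (wageEqRest_nonneg hσ hφ.1 hx0 le_rfl)

theorem continuousOn_wageEq (hσ : 1 < σ) (hφ : φ ∈ Ioo 0 1) :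
    ContinuousOn (wageEq σ φ) (Icc (φ ^ (1 / σ)) (φ ^ (-(1 / σ)))) := by
  have hne : ∀ x ∈ Icc (φ ^ (1 / σ)) (φ ^ (-(1 / σ))), x ≠ 0 :=
    fun x hx => ((rpow_pos_of_pos hφ.1 _).trans_le hx.1).ne'
  have hN : ContinuousOn (wageEqNum σ φ) (Icc (φ ^ (1 / σ)) (φ ^ (-(1 / σ)))) := by
    unfold wageEqNum
    fun_prop (disch := exact fun x hx => Or.inl (hne x hx))
  have hM : ContinuousOn (wageEqRest σ φ) (Icc (φ ^ (1 / σ)) (φ ^ (-(1 / σ)))) := by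
    unfold wageEqRest
    fun_prop (disch := exact fun x hx => Or.inl (hne x hx))
  exact hN.div (hN.add hM) fun x hx => (wageEqNum_add_wageEqRest_pos hσ hφ hx).ne'

end WageEquation

/-- for `σ > 1` and `φ ∈ (0,1)`, the wage-equation function `f` is strictly
increasing on `[φ^{1/σ}, φ^{−1/σ}]` and maps this interval bijectively onto `[0,1]`;
consequently there is a unique strictly increasing `w : [0,1] → [φ^{1/σ}, φ^{−1/σ}]`
with `f(w(h)) = h` for all `h ∈ [0,1]`. -/
theorem stmt_3 (σ φ : ℝ) (hσ : 1 < σ) (hφ : φ ∈ Set.Ioo (0 : ℝ) 1) :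
    StrictMonoOn (wageEq σ φ) (Set.Icc (φ ^ (1 / σ)) (φ ^ (-(1 / σ)))) ∧
    Set.BijOn (wageEq σ φ) (Set.Icc (φ ^ (1 / σ)) (φ ^ (-(1 / σ)))) (Set.Icc 0 1) ∧
    ∃! w : Set.Icc (0 : ℝ) 1 → ℝ,
      StrictMono w ∧
      ∀ h : Set.Icc (0 : ℝ) 1,
        w h ∈ Set.Icc (φ ^ (1 / σ)) (φ ^ (-(1 / σ))) ∧ wageEq σ φ (w h) = (h : ℝ) := by
  have hσ0 : 0 < σ := zero_lt_one.trans hσ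
  have hmono := wageEq_strictMonoOn hσ hφ
  have hbij := hmono.bijOn_Icc_of_continuousOn (continuousOn_wageEq hσ hφ)
    (rpow_one_div_lt_rpow_neg_one_div hσ0 hφ).le
  rw [wageEq_rpow_one_div hσ0.ne' hφ.1.le, wageEq_rpow_neg_one_div hσ0 hφ] at hbij
  exact ⟨hmono, hbij, hmono.existsUnique_strictMono_rightInvOn hbij.surjOn⟩
end

section
/- Let σ > 1 and w > 0. Write f(w; φ) for the wage-equation function with freeness of trade φ. For every φ ∈ (0,1) with w^{2σ} − (w+1)·φ·w^σ + w ≠ 0, the map φ ↦ f(w; φ) has derivative at φ equal to w^{σ+1}·(w^{2σ} − 1)/(w^{2σ} − (w+1)·φ·w^σ + w)²; in particular this derivative is strictly positive when w > 1 and strictly negative when 0 < w < 1. -/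
/-! With `a = w^σ`, the map `φ ↦ f(w; φ)` is the Möbius function `φ ↦ (a - φ)/((a - φ) + w(a⁻¹ - φ))`,
whose derivative is `w(a - a⁻¹)/D²` for its denominator `D`. Multiplying numerator and denominator
by `a²` and using `a·D = a² - (w + 1)φa + w` gives the stated formula, and its sign is that of
`a² - 1 = w^{2σ} - 1`. -/

open Real

lemma hasDerivAt_sub_div_sub_add_mul_sub {a b c x : ℝ} (hx : a - x + c * (b - x) ≠ 0) :
    HasDerivAt (fun y => (a - y) / (a - y + c * (b - y)))
      (c * (a - b) / (a - x + c * (b - x)) ^ 2) x := by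
  have hnum : HasDerivAt (fun y => a - y) (-1) x := (hasDerivAt_id x).const_sub a
  have hden : HasDerivAt (fun y => a - y + c * (b - y)) (-1 + c * -1) x :=
    hnum.add (((hasDerivAt_id x).const_sub b).const_mul c)
  refine (hnum.div hden hx).congr_deriv ?_
  ring

lemma wageEq_eq_rpow_inv (σ φ : ℝ) {w : ℝ} (hw : 0 < w) :
    wageEq σ φ w = (w ^ σ - φ) / (w ^ σ - φ + w * ((w ^ σ)⁻¹ - φ)) := by
  rw [wageEq, rpow_neg hw.le]

theorem hasDerivAt_wageEq {σ φ w : ℝ} (hw : 0 < w)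
    (hQ : w ^ (2 * σ) - (w + 1) * φ * w ^ σ + w ≠ 0) :
    HasDerivAt (fun φ' => wageEq σ φ' w)
      (w ^ (σ + 1) * (w ^ (2 * σ) - 1) / (w ^ (2 * σ) - (w + 1) * φ * w ^ σ + w) ^ 2) φ := by
  have h2 : w ^ (2 * σ) = (w ^ σ) ^ 2 := by rw [two_mul, rpow_add hw, sq]
  rw [h2] at hQ ⊢
  rw [rpow_add_one hw.ne']
  have hD : w ^ σ - φ + w * ((w ^ σ)⁻¹ - φ) ≠ 0 := by
    contrapose! hQ
    calc (w ^ σ) ^ 2 - (w + 1) * φ * w ^ σ + w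
        = w ^ σ * (w ^ σ - φ + w * ((w ^ σ)⁻¹ - φ)) := by field_simp; ring
      _ = 0 := by rw [hQ, mul_zero]
  simp only [wageEq_eq_rpow_inv _ _ hw]
  refine (hasDerivAt_sub_div_sub_add_mul_sub hD).congr_deriv ?_
  field_simp
  ring

lemma rpow_add_one_mul_rpow_two_mul_sub_one_pos {σ w : ℝ} (hσ : 0 < σ) (hw : 1 < w) :
    0 < w ^ (σ + 1) * (w ^ (2 * σ) - 1) :=
  mul_pos (rpow_pos_of_pos (by linarith) _) (sub_pos.2 (one_lt_rpow hw (by linarith)))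

lemma rpow_add_one_mul_rpow_two_mul_sub_one_neg {σ w : ℝ} (hσ : 0 < σ) (hw₀ : 0 < w)
    (hw : w < 1) : w ^ (σ + 1) * (w ^ (2 * σ) - 1) < 0 :=
  mul_neg_of_pos_of_neg (rpow_pos_of_pos hw₀ _)
    (sub_neg.2 (rpow_lt_one hw₀.le hw (by linarith)))

/-- for `σ > 1`, `w > 0`, and every `φ ∈ (0,1)` with
`w^{2σ} − (w+1)·φ·w^σ + w ≠ 0`, the map `φ ↦ f(w; φ)` has derivative at `φ` equal to
`w^{σ+1}·(w^{2σ} − 1)/(w^{2σ} − (w+1)·φ·w^σ + w)²`; this derivative is strictly positive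
when `w > 1` and strictly negative when `0 < w < 1`. -/
theorem stmt_5 (σ w : ℝ) (hσ : 1 < σ) (hw : 0 < w) :
    ∀ φ ∈ Set.Ioo (0 : ℝ) 1, w ^ (2 * σ) - (w + 1) * φ * w ^ σ + w ≠ 0 →
      HasDerivAt (fun φ' => wageEq σ φ' w)
        (w ^ (σ + 1) * (w ^ (2 * σ) - 1) / (w ^ (2 * σ) - (w + 1) * φ * w ^ σ + w) ^ 2) φ ∧
      (1 < w →
        0 < w ^ (σ + 1) * (w ^ (2 * σ) - 1) / (w ^ (2 * σ) - (w + 1) * φ * w ^ σ + w) ^ 2) ∧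
      (w < 1 →
        w ^ (σ + 1) * (w ^ (2 * σ) - 1) / (w ^ (2 * σ) - (w + 1) * φ * w ^ σ + w) ^ 2 < 0) := by
  intro φ _ hQ
  have hσ₀ : 0 < σ := by linarith
  have hQ2 := pow_two_pos_of_ne_zero hQ
  refine ⟨hasDerivAt_wageEq hw hQ, fun hw1 => ?_, fun hw1 => ?_⟩
  · exact div_pos (rpow_add_one_mul_rpow_two_mul_sub_one_pos hσ₀ hw1) hQ2
  · exact div_neg_of_neg_of_pos (rpow_add_one_mul_rpow_two_mul_sub_one_neg hσ₀ hw hw1) hQ2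
end

section
/- Let σ > 1 and 0 < φ₁ < φ₂ < 1, and write f(w; φ) for the wage-equation function with freeness of trade φ. Suppose h ∈ (1/2, 1], w₁ ∈ (1, φ₁^{−1/σ}] and w₂ ∈ (1, φ₂^{−1/σ}] satisfy f(w₁; φ₁) = h = f(w₂; φ₂). Then w₂ < w₁. Symmetrically, if h ∈ [0, 1/2), w₁ ∈ [φ₁^{1/σ}, 1) and w₂ ∈ [φ₂^{1/σ}, 1) satisfy f(w₁; φ₁) = h = f(w₂; φ₂), then w₂ > w₁. (When region L is larger than region R the equilibrium relative wage is decreasing in the freeness of trade, and increasing when L is smaller.) -/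
open Set

noncomputable def wageResidual (σ φ h w : ℝ) : ℝ :=
  (1 - h) * w ^ σ + h * φ * w - h * w ^ (1 - σ) - (1 - h) * φ

lemma wageResidual_sub_wageResidual (σ φ φ' h w : ℝ) :
    wageResidual σ φ' h w - wageResidual σ φ h w = (φ' - φ) * (h * w - (1 - h)) := by
  unfold wageResidual
  ring

lemma wageResidual_monotoneOn {σ φ h : ℝ} (hσ : 1 ≤ σ) (hφ : 0 ≤ φ) (h₀ : 0 ≤ h) (h₁ : h ≤ 1) :
    MonotoneOn (wageResidual σ φ h) (Ioi 0) := by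
  intro a ha b _ hab
  have hpow : a ^ σ ≤ b ^ σ := Real.rpow_le_rpow (le_of_lt ha) hab (by linarith)
  have hpow' : b ^ (1 - σ) ≤ a ^ (1 - σ) := Real.rpow_le_rpow_of_nonpos ha hab (by linarith)
  unfold wageResidual
  nlinarith [mul_le_mul_of_nonneg_left hpow (sub_nonneg.2 h₁),
    mul_le_mul_of_nonneg_left hpow' h₀, mul_le_mul_of_nonneg_left hab (mul_nonneg h₀ hφ)]

lemma le_rpow_of_mem_Icc {σ φ w : ℝ} (hσ : 0 < σ) (hφ : 0 < φ)
    (hw : w ∈ Icc (φ ^ (1 / σ)) (φ ^ (-(1 / σ)))) :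
    0 < w ∧ φ ≤ w ^ σ ∧ φ ≤ w ^ (-σ) := by
  have hw₀ : 0 < w := (Real.rpow_pos_of_pos hφ _).trans_le hw.1
  refine ⟨hw₀, ?_, ?_⟩
  · rw [one_div] at hw
    exact (Real.rpow_inv_le_iff_of_pos hφ.le hw₀.le hσ).1 hw.1
  · have := Real.rpow_le_rpow_of_nonpos hw₀ hw.2 (by linarith : -σ ≤ 0)
    rwa [← Real.rpow_mul hφ.le, show -(1 / σ) * -σ = 1 by field_simp, Real.rpow_one] at this

lemma wageEq_denom_pos {σ φ w : ℝ} (hσ : 0 < σ) (hφ : 0 < φ) (hφ₁ : φ < 1)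
    (hw : w ∈ Icc (φ ^ (1 / σ)) (φ ^ (-(1 / σ)))) :
    0 < (w ^ σ - φ) + w * (w ^ (-σ) - φ) := by
  obtain ⟨hw₀, hlo, hhi⟩ := le_rpow_of_mem_Icc hσ hφ hw
  rcases le_or_gt 1 w with hw₁ | hw₁
  · have : 1 ≤ w ^ σ := Real.one_le_rpow hw₁ hσ.le
    nlinarith [mul_nonneg hw₀.le (sub_nonneg.2 hhi)]
  · have : 1 ≤ w ^ (-σ) :=
      Real.one_le_rpow_of_pos_of_le_one_of_nonpos hw₀ hw₁.le (by linarith)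
    nlinarith [mul_pos hw₀ (by linarith : 0 < w ^ (-σ) - φ)]

lemma wageResidual_eq_zero {σ φ h w : ℝ} (hσ : 0 < σ) (hφ : 0 < φ) (hφ₁ : φ < 1)
    (hw : w ∈ Icc (φ ^ (1 / σ)) (φ ^ (-(1 / σ)))) (heq : wageEq σ φ w = h) :
    wageResidual σ φ h w = 0 := by
  have hw₀ := (le_rpow_of_mem_Icc hσ hφ hw).1
  rw [wageEq, div_eq_iff (wageEq_denom_pos hσ hφ hφ₁ hw).ne'] at heq
  rw [wageResidual, sub_eq_add_neg 1 σ, Real.rpow_add hw₀, Real.rpow_one]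
  linear_combination heq

lemma lt_of_wageResidual_eq_zero {σ φ φ' h w w' : ℝ} (hσ : 1 ≤ σ) (hφ : 0 ≤ φ)
    (h₀ : 0 ≤ h) (h₁ : h ≤ 1) (hw : 0 < w)
    (hres : wageResidual σ φ h w = 0) (hres' : wageResidual σ φ' h w' = 0)
    (hshift : 0 < (φ' - φ) * (h * w' - (1 - h))) : w' < w := by
  by_contra! hle
  have := wageResidual_monotoneOn hσ hφ h₀ h₁ hw (hw.trans_le hle) hle
  linarith [wageResidual_sub_wageResidual σ φ φ' h w']

/-- for `σ > 1` and `0 < φ₁ < φ₂ < 1`: if `h ∈ (1/2, 1]`,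
`w₁ ∈ (1, φ₁^{−1/σ}]` and `w₂ ∈ (1, φ₂^{−1/σ}]` satisfy `f(w₁; φ₁) = h = f(w₂; φ₂)`,
then `w₂ < w₁`; and symmetrically, if `h ∈ [0, 1/2)`, `w₁ ∈ [φ₁^{1/σ}, 1)` and
`w₂ ∈ [φ₂^{1/σ}, 1)` satisfy `f(w₁; φ₁) = h = f(w₂; φ₂)`, then `w₂ > w₁`. -/
theorem stmt_6 (σ φ₁ φ₂ : ℝ) (hσ : 1 < σ) (h01 : 0 < φ₁) (h12 : φ₁ < φ₂) (h21 : φ₂ < 1) :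
    (∀ h w₁ w₂ : ℝ, h ∈ Set.Ioc (1 / 2 : ℝ) 1 →
      w₁ ∈ Set.Ioc (1 : ℝ) (φ₁ ^ (-(1 / σ))) → w₂ ∈ Set.Ioc (1 : ℝ) (φ₂ ^ (-(1 / σ))) →
      wageEq σ φ₁ w₁ = h → wageEq σ φ₂ w₂ = h → w₂ < w₁) ∧
    (∀ h w₁ w₂ : ℝ, h ∈ Set.Ico (0 : ℝ) (1 / 2) →
      w₁ ∈ Set.Ico (φ₁ ^ (1 / σ)) (1 : ℝ) → w₂ ∈ Set.Ico (φ₂ ^ (1 / σ)) (1 : ℝ) →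
      wageEq σ φ₁ w₁ = h → wageEq σ φ₂ w₂ = h → w₁ < w₂) := by
  have hσ₀ : 0 < σ := by linarith
  have hφ₂ : 0 < φ₂ := h01.trans h12
  have low_le_one : ∀ φ : ℝ, 0 < φ → φ < 1 → φ ^ (1 / σ) ≤ 1 := fun φ hφ hφ₁ =>
    Real.rpow_le_one hφ.le hφ₁.le (by positivity)
  have one_le_high : ∀ φ : ℝ, 0 < φ → φ < 1 → 1 ≤ φ ^ (-(1 / σ)) := fun φ hφ hφ₁ =>
    Real.one_le_rpow_of_pos_of_le_one_of_nonpos hφ hφ₁.le (by simp [hσ₀.le])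
  constructor
  · rintro h w₁ w₂ ⟨hh, hh₁⟩ ⟨hw₁, hw₁'⟩ ⟨hw₂, hw₂'⟩ e₁ e₂
    have r₁ := wageResidual_eq_zero hσ₀ h01 (by linarith)
      ⟨(low_le_one φ₁ h01 (by linarith)).trans hw₁.le, hw₁'⟩ e₁
    have r₂ := wageResidual_eq_zero hσ₀ hφ₂ h21 ⟨(low_le_one φ₂ hφ₂ h21).trans hw₂.le, hw₂'⟩ e₂
    exact lt_of_wageResidual_eq_zero hσ.le h01.le (by linarith) hh₁ (by linarith) r₁ r₂
      (mul_pos (by linarith) (by nlinarith))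
  · rintro h w₁ w₂ ⟨hh₀, hh⟩ ⟨hw₁, hw₁'⟩ ⟨hw₂, hw₂'⟩ e₁ e₂
    have r₁ := wageResidual_eq_zero hσ₀ h01 (by linarith)
      ⟨hw₁, hw₁'.le.trans (one_le_high φ₁ h01 (by linarith))⟩ e₁
    have r₂ := wageResidual_eq_zero hσ₀ hφ₂ h21 ⟨hw₂, hw₂'.le.trans (one_le_high φ₂ hφ₂ h21)⟩ e₂
    exact lt_of_wageResidual_eq_zero hσ.le hφ₂.le hh₀ (by linarith)
      ((Real.rpow_pos_of_pos hφ₂ _).trans_le hw₂) r₂ r₁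
      (mul_pos_of_neg_of_neg (by linarith) (by nlinarith))
end

section
/- Let σ > 1 and φ ∈ (0,1). The wage-equation function f has derivative at w = 1 equal to (2σ + φ − 1)/(4(1 − φ)). (Hence the implicitly defined short-run equilibrium wage w(h) has derivative 4(1 − φ)/(2σ + φ − 1) at the symmetric distribution h = 1/2.) -/
theorem hasDerivAt_rpow_const_one (p : ℝ) : HasDerivAt (fun w : ℝ => w ^ p) p 1 := by
  simpa using Real.hasDerivAt_rpow_const (x := 1) (p := p) (Or.inl one_ne_zero)

/- The contributions `σ` of `w ^ σ` and `-σ` of `w * w ^ (-σ)` cancel. -/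
theorem hasDerivAt_wageEq_denom_one (σ φ : ℝ) :
    HasDerivAt (fun w : ℝ => (w ^ σ - φ) + w * (w ^ (-σ) - φ)) (1 - φ) 1 := by
  have h := ((hasDerivAt_rpow_const_one σ).sub_const φ).add
    ((hasDerivAt_id 1).mul ((hasDerivAt_rpow_const_one (-σ)).sub_const φ))
  exact h.congr_deriv (by simp)

theorem stmt_7_general (σ φ : ℝ) (hφ : φ ∈ Set.Ioo (0 : ℝ) 1) :
    HasDerivAt (wageEq σ φ) ((2 * σ + φ - 1) / (4 * (1 - φ))) 1 := by
  have hφ1 : 1 - φ ≠ 0 := sub_ne_zero.mpr hφ.2.ne'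
  have hdenom : ((1 : ℝ) ^ σ - φ) + 1 * ((1 : ℝ) ^ (-σ) - φ) = 2 * (1 - φ) := by
    simp only [Real.one_rpow]
    ring
  have h := ((hasDerivAt_rpow_const_one σ).sub_const φ).div (hasDerivAt_wageEq_denom_one σ φ)
    (by rw [hdenom]; exact mul_ne_zero two_ne_zero hφ1)
  refine h.congr_deriv ?_
  rw [hdenom, Real.one_rpow]
  field_simp
  ring

/-- for `σ > 1` and `φ ∈ (0,1)`, the wage-equation function has derivative
`(2σ + φ − 1)/(4(1 − φ))` at `w = 1`. -/
theorem stmt_7 (σ φ : ℝ) (hσ : 1 < σ) (hφ : φ ∈ Set.Ioo (0 : ℝ) 1) :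
    HasDerivAt (wageEq σ φ) ((2 * σ + φ - 1) / (4 * (1 - φ))) 1 :=
  stmt_7_general σ φ hφ
end

section
/- Let σ > 1 and θ ≥ 0, and define g(φ) = 2(2σ−1)(1−φ)·((1+φ)/2)^{(1−θ)/(σ−1)} / [(σ−1)(2σ+φ−1)] for φ ∈ (0,1). If either (i) 0 ≤ θ < 1 and σ > 1 + √2/2, or (ii) θ ≥ 1, then g is strictly decreasing on (0,1). -/
/-!
Up to the positive factor `2(2σ-1)/(σ-1)`, `g` is `profile a b` with `a = (1-θ)/(σ-1)` and
`b = 2σ-1`. The derivative of `profile a b` at `φ` is a positive multiple of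
`a(1-φ)(b+φ) - (b+1)(1+φ)`, which is negative on `(0,1)`: trivially when `a ≤ 0` (that is,
`θ ≥ 1`), and otherwise because `(1-φ)(b+φ) ≤ b`, while `a(b-1) ≤ 2` and `(b-1)² > 2`
(that is, `σ > 1 + √2/2`) give `a b ≤ 2b/(b-1) < b+1`.
-/

open Set

noncomputable def profile (a b x : ℝ) : ℝ :=
  (1 - x) * ((1 + x) / 2) ^ a / (b + x)

theorem hasDerivAt_profile (a : ℝ) {b x : ℝ} (hx : -1 < x) (hbx : 0 < b + x) :
    HasDerivAt (profile a b)
      (((1 + x) / 2) ^ (a - 1) * (a * (1 - x) * (b + x) - (b + 1) * (1 + x)) /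
        (2 * (b + x) ^ 2)) x := by
  have hu : 0 < (1 + x) / 2 := by linarith
  have hbase : HasDerivAt (fun y : ℝ => (1 + y) / 2) (1 / 2) x := by
    simpa using ((hasDerivAt_id x).const_add 1).div_const 2
  have hpow := hbase.rpow_const (p := a) (Or.inl hu.ne')
  have hnum := (hasDerivAt_id' x |>.const_sub 1).mul hpow
  have hden := (hasDerivAt_id' x).const_add b
  have hsplit : ((1 + x) / 2) ^ a = ((1 + x) / 2) ^ (a - 1) * ((1 + x) / 2) := by
    rw [← Real.rpow_add_one hu.ne']; ring_nf
  refine (hnum.div hden hbx.ne').congr_deriv ?_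
  rw [Pi.mul_apply, hsplit]
  field_simp
  ring

theorem strictAntiOn_profile {a b : ℝ} (hb : 0 ≤ b)
    (h : ∀ x ∈ Ioo (0 : ℝ) 1, a * (1 - x) * (b + x) < (b + 1) * (1 + x)) :
    StrictAntiOn (profile a b) (Ioo 0 1) := by
  have hderiv : ∀ x ∈ Ioo (0 : ℝ) 1, HasDerivAt (profile a b) _ x := fun x hx =>
    hasDerivAt_profile a (by linarith [hx.1]) (by linarith [hx.1])
  refine strictAntiOn_of_hasDerivWithinAt_neg (convex_Ioo 0 1)
    (fun x hx => (hderiv x hx).continuousAt.continuousWithinAt)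
    (fun x hx => (hderiv x (interior_subset hx)).hasDerivWithinAt) fun x hx => ?_
  rw [interior_Ioo] at hx
  have hu : 0 < ((1 + x) / 2) ^ (a - 1) := Real.rpow_pos_of_pos (by linarith [hx.1]) _
  have hbx : 0 < b + x := by linarith [hx.1]
  exact div_neg_of_neg_of_pos (mul_neg_of_pos_of_neg hu (by linarith [h x hx])) (by positivity)

theorem profile_slope_lt_of_nonpos {a b x : ℝ} (ha : a ≤ 0) (hb : 0 ≤ b)
    (hx : x ∈ Ioo (0 : ℝ) 1) :
    a * (1 - x) * (b + x) < (b + 1) * (1 + x) := by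
  obtain ⟨hx0, hx1⟩ := hx
  have : a * (1 - x) * (b + x) ≤ 0 :=
    mul_nonpos_of_nonpos_of_nonneg (mul_nonpos_of_nonpos_of_nonneg ha (by linarith)) (by linarith)
  nlinarith

theorem profile_slope_lt_of_le {a b x : ℝ} (hb : 1 < b) (hb2 : 2 < (b - 1) ^ 2)
    (ha : a * (b - 1) ≤ 2) (hx : x ∈ Ioo (0 : ℝ) 1) :
    a * (1 - x) * (b + x) < (b + 1) * (1 + x) := by
  obtain ⟨hx0, hx1⟩ := hx
  rcases le_or_gt a 0 with ha0 | ha0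
  · exact profile_slope_lt_of_nonpos ha0 (by linarith) ⟨hx0, hx1⟩
  have hprod : (1 - x) * (b + x) ≤ b := by nlinarith
  have hab : a * b < b + 1 := by nlinarith
  calc a * (1 - x) * (b + x) = a * ((1 - x) * (b + x)) := by ring
    _ ≤ a * b := mul_le_mul_of_nonneg_left hprod ha0.le
    _ < b + 1 := hab
    _ ≤ (b + 1) * (1 + x) := by nlinarith

/-- let `σ > 1`, `θ ≥ 0` and
`g(φ) = 2(2σ−1)(1−φ)·((1+φ)/2)^{(1−θ)/(σ−1)}/[(σ−1)(2σ+φ−1)]`.  If either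
(i) `0 ≤ θ < 1` and `σ > 1 + √2/2`, or (ii) `θ ≥ 1`, then `g` is strictly
decreasing on `(0,1)`. -/
theorem stmt_9 (σ θ : ℝ) (hσ : 1 < σ) (hθ : 0 ≤ θ)
    (hcase : (θ < 1 ∧ 1 + Real.sqrt 2 / 2 < σ) ∨ 1 ≤ θ) :
    StrictAntiOn (fun φ : ℝ =>
        2 * (2 * σ - 1) * (1 - φ) * ((1 + φ) / 2) ^ ((1 - θ) / (σ - 1)) /
          ((σ - 1) * (2 * σ + φ - 1)))
      (Set.Ioo (0 : ℝ) 1) := by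
  have hg : (fun φ : ℝ =>
        2 * (2 * σ - 1) * (1 - φ) * ((1 + φ) / 2) ^ ((1 - θ) / (σ - 1)) /
          ((σ - 1) * (2 * σ + φ - 1))) =
      fun φ => 2 * (2 * σ - 1) / (σ - 1) * profile ((1 - θ) / (σ - 1)) (2 * σ - 1) φ := by
    funext φ
    simp only [profile, div_eq_mul_inv, mul_inv, show 2 * σ + φ - 1 = 2 * σ - 1 + φ by ring]
    ring
  have hc : 0 < 2 * (2 * σ - 1) / (σ - 1) := div_pos (by linarith) (by linarith)
  have hprofile : StrictAntiOn (profile ((1 - θ) / (σ - 1)) (2 * σ - 1)) (Ioo 0 1) := by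
    refine strictAntiOn_profile (by linarith) fun x hx => ?_
    rcases hcase with ⟨hθ1, hσ2⟩ | hθ1
    · have hsqrt := Real.sq_sqrt (show (0 : ℝ) ≤ 2 by norm_num)
      refine profile_slope_lt_of_le (by linarith) ?_ ?_ hx
      · nlinarith [Real.sqrt_nonneg 2]
      · rw [show 2 * σ - 1 - 1 = 2 * (σ - 1) by ring, mul_left_comm,
          div_mul_cancel₀ _ (by linarith : σ - 1 ≠ 0)]
        linarith
    · exact profile_slope_lt_of_nonpos (div_nonpos_of_nonpos_of_nonneg (by linarith) (by linarith))
        (by linarith) hx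
  rw [hg]
  exact fun x hx y hy hxy => mul_lt_mul_of_pos_left (hprofile hx hy hxy) hc
end

section
/- Let σ > 1, θ ≥ 0, and assume either (i) 0 ≤ θ < 1 and σ > 1 + √2/2, or (ii) θ ≥ 1. Define g(φ) = 2(2σ−1)(1−φ)·((1+φ)/2)^{(1−θ)/(σ−1)} / [(σ−1)(2σ+φ−1)] on (0,1). Then for every c > 0: (a) if g(φ₀) ≤ c for some φ₀ ∈ (0,1), then g(φ₁) < c for every φ₁ ∈ (φ₀, 1); and (b) g(φ) → 0 as φ → 1⁻, so there exists φ̄ ∈ (0,1) with g(φ) < c for all φ ∈ (φ̄, 1). (As the freeness of trade increases, symmetric dispersion either remains stable or becomes stable, taking c = t′(1/2).) -/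
/-!
Write `g = C · f` with `C > 0` and `f φ = (1 - φ) ((1 + φ)/2)^α / (a + φ)`, where `a = 2σ - 1` and
`α = (1 - θ)/(σ - 1)`. The derivative of `f` has the sign of `α (1 - φ)(a + φ) - (a + 1)(1 + φ)`,
which is negative on `(0, 1)` as soon as `α a ≤ a + 1`; in case (i) this follows from `θ ≥ 0`
and `2(σ - 1)² > 1`, in case (ii) from `α ≤ 0`. Hence `g` is strictly decreasing on `[0, 1]`,
and it is continuous at `1` with `g 1 = 0`, which gives both claims.
-/

open Filter Topology

section

variable {a α : ℝ}

theorem hasDerivAt_one_sub_mul_rpow_div {φ : ℝ} (hφ : 0 < 1 + φ) (ha : 0 < a + φ) :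
    HasDerivAt (fun x => (1 - x) * ((1 + x) / 2) ^ α / (a + x))
      (((1 + φ) / 2) ^ (α - 1) * (α * (1 - φ) * (a + φ) - (a + 1) * (1 + φ)) /
        (2 * (a + φ) ^ 2)) φ := by
  have hb : HasDerivAt (fun x => (1 + x) / 2) (1 / 2) φ := by
    simpa using ((hasDerivAt_id φ).const_add 1).div_const 2
  have hpow := hb.rpow_const (p := α) (Or.inl (by positivity))
  refine ((((hasDerivAt_id φ).const_sub 1).mul hpow).div
    ((hasDerivAt_id φ).const_add a) ha.ne').congr_deriv ?_
  have hsplit : ((1 + φ) / 2) ^ α = ((1 + φ) / 2) ^ (α - 1) * ((1 + φ) / 2) := by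
    rw [← Real.rpow_add_one (by positivity)]; ring_nf
  simp only [Pi.mul_apply, id, hsplit]
  field_simp
  ring

theorem mul_one_sub_mul_add_lt (ha : 1 ≤ a) (hαa : α * a ≤ a + 1) {φ : ℝ}
    (h0 : 0 < φ) (h1 : φ < 1) : α * (1 - φ) * (a + φ) < (a + 1) * (1 + φ) := by
  have hprod : 0 ≤ (1 - φ) * (a + φ) := by nlinarith
  rcases le_or_gt α 0 with hα | hα
  · nlinarith [mul_nonpos_of_nonpos_of_nonneg hα hprod]
  · have : (1 - φ) * (a + φ) ≤ a := by nlinarith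
    nlinarith [mul_le_mul_of_nonneg_left this hα.le]

theorem strictAntiOn_one_sub_mul_rpow_div (ha : 1 ≤ a) (hαa : α * a ≤ a + 1) :
    StrictAntiOn (fun x => (1 - x) * ((1 + x) / 2) ^ α / (a + x)) (Set.Icc 0 1) := by
  apply strictAntiOn_of_deriv_neg (convex_Icc 0 1)
  · intro x hx
    exact (hasDerivAt_one_sub_mul_rpow_div (by linarith [hx.1]) (by linarith [hx.1])
      ).continuousAt.continuousWithinAt
  · intro x hx
    rw [interior_Icc] at hx
    rw [(hasDerivAt_one_sub_mul_rpow_div (by linarith [hx.1]) (by linarith [hx.1])).deriv]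
    have hnum := mul_one_sub_mul_add_lt ha hαa hx.1 hx.2
    have : 0 < ((1 + x) / 2) ^ (α - 1) := Real.rpow_pos_of_pos (by linarith [hx.1]) _
    apply div_neg_of_neg_of_pos
    · nlinarith
    · have : 0 < a + x := by linarith [hx.1]
      positivity

theorem tendsto_one_sub_mul_rpow_div_nhdsLT_one (ha : 0 ≤ a) :
    Tendsto (fun x => (1 - x) * ((1 + x) / 2) ^ α / (a + x)) (𝓝[<] 1) (𝓝 0) := by
  have hcont := (hasDerivAt_one_sub_mul_rpow_div (α := α) (φ := 1) (by norm_num)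
    (by linarith)).continuousAt.tendsto
  simpa using hcont.mono_left nhdsWithin_le_nhds

end

/-- let `σ > 1`, `θ ≥ 0`, with either (i) `0 ≤ θ < 1` and `σ > 1 + √2/2`,
or (ii) `θ ≥ 1`, and let
`g(φ) = 2(2σ−1)(1−φ)·((1+φ)/2)^{(1−θ)/(σ−1)}/[(σ−1)(2σ+φ−1)]` on `(0,1)`.
Then for every `c > 0`: (a) if `g(φ₀) ≤ c` for some `φ₀ ∈ (0,1)`, then `g(φ₁) < c` for
every `φ₁ ∈ (φ₀, 1)`; and (b) `g(φ) → 0` as `φ → 1⁻`, so there is `φ̄ ∈ (0,1)` with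
`g(φ) < c` for all `φ ∈ (φ̄, 1)`. -/
theorem stmt_10 (σ θ : ℝ) (hσ : 1 < σ) (hθ : 0 ≤ θ)
    (hcase : (θ < 1 ∧ 1 + Real.sqrt 2 / 2 < σ) ∨ 1 ≤ θ)
    (g : ℝ → ℝ)
    (hg : g = fun φ : ℝ =>
      2 * (2 * σ - 1) * (1 - φ) * ((1 + φ) / 2) ^ ((1 - θ) / (σ - 1)) /
        ((σ - 1) * (2 * σ + φ - 1))) :
    (∀ c : ℝ, 0 < c → ∀ φ₀ ∈ Set.Ioo (0 : ℝ) 1, g φ₀ ≤ c →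
      ∀ φ₁ ∈ Set.Ioo φ₀ 1, g φ₁ < c) ∧
    Tendsto g (𝓝[<] 1) (𝓝 0) ∧
    (∀ c : ℝ, 0 < c → ∃ φbar ∈ Set.Ioo (0 : ℝ) 1, ∀ φ ∈ Set.Ioo φbar 1, g φ < c) := by
  set α := (1 - θ) / (σ - 1)
  set f := fun x : ℝ => (1 - x) * ((1 + x) / 2) ^ α / (2 * σ - 1 + x)
  have hC : 0 < 2 * (2 * σ - 1) / (σ - 1) := div_pos (by linarith) (by linarith)
  have hgf : g = fun x => 2 * (2 * σ - 1) / (σ - 1) * f x := by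
    rw [hg]; funext x; simp only [f]; field_simp; ring_nf
  have hαa : α * (2 * σ - 1) ≤ 2 * σ - 1 + 1 := by
    rw [div_mul_eq_mul_div, div_le_iff₀ (by linarith)]
    rcases hcase with ⟨-, hσ'⟩ | hθ'
    · have : 1 < 2 * (σ - 1) ^ 2 := by
        nlinarith [Real.sq_sqrt (zero_le_two : (0:ℝ) ≤ 2), Real.sqrt_nonneg 2]
      nlinarith
    · nlinarith
  have hanti : StrictAntiOn g (Set.Icc 0 1) := by
    rw [hgf]
    intro x hx y hy hxy
    exact mul_lt_mul_of_pos_left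
      (strictAntiOn_one_sub_mul_rpow_div (by linarith) hαa hx hy hxy) hC
  have hdecr : ∀ c : ℝ, 0 < c → ∀ φ₀ ∈ Set.Ioo (0 : ℝ) 1, g φ₀ ≤ c →
      ∀ φ₁ ∈ Set.Ioo φ₀ 1, g φ₁ < c := fun c _ φ₀ hφ₀ hle φ₁ hφ₁ =>
    (hanti (Set.Ioo_subset_Icc_self hφ₀) ⟨hφ₀.1.trans hφ₁.1 |>.le, hφ₁.2.le⟩ hφ₁.1).trans_le hle
  have htend : Tendsto g (𝓝[<] 1) (𝓝 0) := by
    simpa [hgf] using (tendsto_one_sub_mul_rpow_div_nhdsLT_one (α := α)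
      (by linarith : (0:ℝ) ≤ 2 * σ - 1)).const_mul (2 * (2 * σ - 1) / (σ - 1))
  refine ⟨hdecr, htend, fun c hc => ?_⟩
  obtain ⟨φ₀, hlt, hφ₀⟩ :=
    ((htend.eventually (gt_mem_nhds hc)).and (Ioo_mem_nhdsLT zero_lt_one)).exists
  exact ⟨φ₀, hφ₀, hdecr c hc φ₀ hφ₀ hlt.le⟩
end

section
/- Let μ > 0 and let g : [1/2, 1) → ℝ be continuous and bounded above with g(1/2) = 0. Define Δt(h) = μ·(ln(h) − ln(1−h)). Suppose there exists δ > 0 such that g(h) > Δt(h) for all h ∈ (1/2, 1/2 + δ). Then there exists h* ∈ (1/2, 1) with g(h*) = Δt(h*). (Under Logit-type heterogeneous location preferences, whenever symmetric dispersion is unstable a partial agglomeration equilibrium h* ∈ (1/2,1) exists.) -/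
/-!
Let `f = g - Δt`. Near `1/2` the hypothesis makes `f` positive, while near `1` the dispersion
force `Δt(h) = μ (ln h - ln (1 - h))` tends to `+∞` and so exceeds the upper bound of `g`,
making `f` negative. The intermediate value theorem on a compact interval between two such
points yields a zero of `f` in `(1/2, 1)`.
-/

open Real Set Filter Topology

lemma tendsto_log_sub_log_one_sub_nhdsLT_one :
    Tendsto (fun h : ℝ => log h - log (1 - h)) (𝓝[<] 1) atTop := by
  have h_log : Tendsto log (𝓝[<] (1 : ℝ)) (𝓝 0) := by
    simpa using (continuousAt_log one_ne_zero).tendsto.mono_left nhdsWithin_le_nhds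
  have h_one_sub : Tendsto (fun h : ℝ => 1 - h) (𝓝[<] 1) (𝓝[>] 0) := by
    refine tendsto_nhdsWithin_of_tendsto_nhds_of_eventually_within _
      (((continuous_const.sub continuous_id).tendsto' 1 0 (sub_self 1)).mono_left
        nhdsWithin_le_nhds) ?_
    filter_upwards [self_mem_nhdsWithin] with h hh
    exact sub_pos.mpr (mem_Iio.mp hh)
  simp_rw [sub_eq_add_neg]
  exact h_log.add_atTop (tendsto_neg_atBot_atTop.comp (tendsto_log_nhdsGT_zero.comp h_one_sub))

lemma continuousOn_log_sub_log_one_sub :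
    ContinuousOn (fun h : ℝ => log h - log (1 - h)) (Ioo 0 1) := by
  refine (continuousOn_log.mono fun h hh => ?_).sub
    (continuousOn_log.comp (continuousOn_const.sub continuousOn_id) fun h hh => ?_)
  · exact hh.1.ne'
  · exact (sub_pos.mpr hh.2).ne'

theorem stmt_15_general (μ : ℝ) (hμ : 0 < μ) (g : ℝ → ℝ)
    (hgc : ContinuousOn g (Set.Ico (1 / 2 : ℝ) 1))
    (hgb : BddAbove (g '' Set.Ico (1 / 2 : ℝ) 1))
    (hδ : ∃ δ > (0 : ℝ), ∀ h ∈ Set.Ioo (1 / 2 : ℝ) (1 / 2 + δ),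
      μ * (Real.log h - Real.log (1 - h)) < g h) :
    ∃ hstar ∈ Set.Ioo (1 / 2 : ℝ) 1,
      g hstar = μ * (Real.log hstar - Real.log (1 - hstar)) := by
  obtain ⟨δ, hδ_pos, h_lt_g⟩ := hδ
  obtain ⟨M, hM⟩ := hgb
  obtain ⟨a, ha_gt, ha_lt⟩ : ∃ a, 1 / 2 < a ∧ a < min (1 / 2 + δ) 1 :=
    exists_between (lt_min (by linarith) (by norm_num))
  have ha_lt_one : a < 1 := ha_lt.trans_le (min_le_right _ _)
  obtain ⟨b, hb_gt_M, hab, hb_lt_one⟩ : ∃ b, M < μ * (log b - log (1 - b)) ∧ a < b ∧ b < 1 :=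
    (((tendsto_log_sub_log_one_sub_nhdsLT_one.const_mul_atTop hμ).eventually_gt_atTop M).and
      (Ioo_mem_nhdsLT ha_lt_one)).exists
  have h_sub : Icc a b ⊆ Ioo (1 / 2) 1 := Icc_subset_Ioo ha_gt hb_lt_one
  have h_cont : ContinuousOn (fun h => g h - μ * (log h - log (1 - h))) (Icc a b) :=
    (hgc.mono fun h hh => Ioo_subset_Ico_self (h_sub hh)).sub
      ((continuousOn_log_sub_log_one_sub.mono fun h hh =>
        ⟨by linarith [(h_sub hh).1], (h_sub hh).2⟩).const_smul μ)
  have h_pos_a : 0 ≤ g a - μ * (log a - log (1 - a)) :=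
    (sub_pos.mpr (h_lt_g a ⟨ha_gt, ha_lt.trans_le (min_le_left _ _)⟩)).le
  have h_neg_b : g b - μ * (log b - log (1 - b)) ≤ 0 := by
    linarith [hM (mem_image_of_mem g ⟨by linarith, hb_lt_one⟩)]
  obtain ⟨x, hx, hx_zero⟩ := intermediate_value_Icc' hab.le h_cont ⟨h_neg_b, h_pos_a⟩
  exact ⟨x, h_sub hx, sub_eq_zero.mp hx_zero⟩

/-- let `μ > 0` and let `g` be continuous and bounded above on `[1/2, 1)`
with `g(1/2) = 0`, and let `Δt(h) = μ(ln h − ln(1−h))`.  If `g(h) > Δt(h)` for all `h`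
in some right-neighbourhood `(1/2, 1/2 + δ)`, then there exists `h* ∈ (1/2, 1)` with
`g(h*) = Δt(h*)`. -/
theorem stmt_15 (μ : ℝ) (hμ : 0 < μ) (g : ℝ → ℝ)
    (hgc : ContinuousOn g (Set.Ico (1 / 2 : ℝ) 1))
    (hgb : BddAbove (g '' Set.Ico (1 / 2 : ℝ) 1))
    (hg0 : g (1 / 2) = 0)
    (hδ : ∃ δ > (0 : ℝ), ∀ h ∈ Set.Ioo (1 / 2 : ℝ) (1 / 2 + δ),
      μ * (Real.log h - Real.log (1 - h)) < g h) :
    ∃ hstar ∈ Set.Ioo (1 / 2 : ℝ) 1,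
      g hstar = μ * (Real.log hstar - Real.log (1 - hstar)) :=
  stmt_15_general μ hμ g hgc hgb hδ
end

section
/- Let σ > 1, φ ∈ (0,1), μ > 0, and X ∈ (1, 1/φ). Define Γ(μ, X) = φ·[μ(σ−1)² − 2σ + 1]·(1 + X²) − X·{ φ²·[−(μ+2)σ + μ + 1] + (2σ−1)·[μ(σ−1) − 1] } and μ_p(X) = (2σ−1)·(X − φ)·(1 − Xφ) / [ (σ−1)·( (2σ − φ² − 1)·X − (σ−1)·φ·(X² + 1) ) ]. Then Γ(μ, X) < 0 if and only if μ > μ_p(X). (With X = w^σ at an interior equilibrium, this is the stability condition for partial agglomeration under Logit preferences and logarithmic consumption utility.) -/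
/-!
Γ is affine in μ: `Γ(μ, X) = N − μ D`, where `N` and `D` are the numerator and denominator of
`μ_p(X)`. On `φ < X < 1/φ` the denominator is positive, since its second factor equals
`(σ − 1)(X(1 − Xφ) + (X − φ)) + (1 − φ²)X`; hence `Γ < 0 ↔ N < μ D ↔ μ_p(X) < μ`.
-/

theorem stabilityFunction_eq_sub_mul (σ φ μ X : ℝ) :
    φ * (μ * (σ - 1) ^ 2 - 2 * σ + 1) * (1 + X ^ 2) -
        X * (φ ^ 2 * (-(μ + 2) * σ + μ + 1) + (2 * σ - 1) * (μ * (σ - 1) - 1)) =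
      (2 * σ - 1) * (X - φ) * (1 - X * φ) -
        μ * ((σ - 1) * ((2 * σ - φ ^ 2 - 1) * X - (σ - 1) * φ * (X ^ 2 + 1))) := by
  ring

theorem stabilityThreshold_denom_pos {σ φ X : ℝ} (hσ : 1 < σ) (hφ0 : 0 < φ) (hφ1 : φ < 1)
    (hφX : φ < X) (hXφ : X * φ < 1) :
    0 < (σ - 1) * ((2 * σ - φ ^ 2 - 1) * X - (σ - 1) * φ * (X ^ 2 + 1)) := by
  have hσ' : 0 < σ - 1 := sub_pos.2 hσ
  have hX0 : 0 < X := hφ0.trans hφX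
  have hφ2 : 0 < 1 - φ ^ 2 := by nlinarith
  have hsplit : (2 * σ - φ ^ 2 - 1) * X - (σ - 1) * φ * (X ^ 2 + 1) =
      (σ - 1) * (X * (1 - X * φ) + (X - φ)) + (1 - φ ^ 2) * X := by ring
  rw [hsplit]
  exact mul_pos hσ' (add_pos (mul_pos hσ' (add_pos (mul_pos hX0 (sub_pos.2 hXφ)) (sub_pos.2 hφX)))
    (mul_pos hφ2 hX0))

theorem stmt_16_general (σ φ μ X : ℝ) (hσ : 1 < σ) (hφ : φ ∈ Set.Ioo (0 : ℝ) 1)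
    (hX : X ∈ Set.Ioo (1 : ℝ) (1 / φ)) :
    φ * (μ * (σ - 1) ^ 2 - 2 * σ + 1) * (1 + X ^ 2) -
        X * (φ ^ 2 * (-(μ + 2) * σ + μ + 1) + (2 * σ - 1) * (μ * (σ - 1) - 1)) < 0 ↔
    μ > (2 * σ - 1) * (X - φ) * (1 - X * φ) /
        ((σ - 1) * ((2 * σ - φ ^ 2 - 1) * X - (σ - 1) * φ * (X ^ 2 + 1))) := by
  obtain ⟨hφ0, hφ1⟩ := hφ
  obtain ⟨hX1, hXφ⟩ := hX
  have hD := stabilityThreshold_denom_pos hσ hφ0 hφ1 (hφ1.trans hX1)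
    ((lt_div_iff₀ hφ0).1 hXφ)
  rw [stabilityFunction_eq_sub_mul, sub_neg, gt_iff_lt, div_lt_iff₀ hD, mul_comm]

/-- for `σ > 1`, `φ ∈ (0,1)`, `μ > 0` and `X ∈ (1, 1/φ)`, with
`Γ(μ,X) = φ[μ(σ−1)² − 2σ + 1](1 + X²) − X{φ²[−(μ+2)σ + μ + 1] + (2σ−1)[μ(σ−1) − 1]}`
and `μ_p(X) = (2σ−1)(X − φ)(1 − Xφ)/[(σ−1)((2σ − φ² − 1)X − (σ−1)φ(X² + 1))]`,
one has `Γ(μ,X) < 0` if and only if `μ > μ_p(X)`. -/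
theorem stmt_16 (σ φ μ X : ℝ) (hσ : 1 < σ) (hφ : φ ∈ Set.Ioo (0 : ℝ) 1)
    (hμ : 0 < μ) (hX : X ∈ Set.Ioo (1 : ℝ) (1 / φ)) :
    φ * (μ * (σ - 1) ^ 2 - 2 * σ + 1) * (1 + X ^ 2) -
        X * (φ ^ 2 * (-(μ + 2) * σ + μ + 1) + (2 * σ - 1) * (μ * (σ - 1) - 1)) < 0 ↔
    μ > (2 * σ - 1) * (X - φ) * (1 - X * φ) /
        ((σ - 1) * ((2 * σ - φ ^ 2 - 1) * X - (σ - 1) * φ * (X ^ 2 + 1))) :=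
  stmt_16_general σ φ μ X hσ hφ hX
end

section
/- Let σ > 1 and φ ∈ (0,1). Define μ_p(X) = (2σ−1)·(X − φ)·(1 − Xφ) / [ (σ−1)·( (2σ − φ² − 1)·X − (σ−1)·φ·(X² + 1) ) ] for X ∈ [1, 1/φ], and μ_d = (2σ−1)(1−φ)/[(σ−1)(2σ+φ−1)]. Then: (a) μ_p is strictly decreasing on (1, 1/φ), its derivative at X being σ(2σ−1)(X²−1)φ(φ²−1)/{(σ−1)[(σ−1)(X²+1)φ − 2σX + Xφ² + X]²} < 0; (b) μ_p(1) = μ_d and μ_p(X) → 0 as X → 1/φ; hence (c) 0 < μ_p(X) < μ_d for every X ∈ (1, 1/φ). -/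
open Filter Topology Set

/-!
The denominator of `μ_p` splits as `σX(1 - φX) + (X - φ)(σ - 1 + φX)`, so it is positive on
`[1, 1/φ]` and `μ_p` is smooth there. The quotient rule gives a derivative whose numerator carries
the factor `(X² - 1)(φ² - 1) < 0`, so `μ_p` is strictly decreasing on the closed interval
`[1, 1/φ]`. Its value at `1` is `μ_d` and it vanishes at `1/φ`, which gives the limit and the
bounds `0 < μ_p < μ_d` inside.
-/

noncomputable section

namespace StabilityThreshold

variable {σ φ X : ℝ}

def muPDenom (σ φ X : ℝ) : ℝ := (2 * σ - φ ^ 2 - 1) * X - (σ - 1) * φ * (X ^ 2 + 1)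

def muP (σ φ X : ℝ) : ℝ := (2 * σ - 1) * (X - φ) * (1 - X * φ) / ((σ - 1) * muPDenom σ φ X)

def muPDeriv (σ φ X : ℝ) : ℝ :=
  σ * (2 * σ - 1) * (X ^ 2 - 1) * φ * (φ ^ 2 - 1) /
    ((σ - 1) * ((σ - 1) * (X ^ 2 + 1) * φ - 2 * σ * X + X * φ ^ 2 + X) ^ 2)

lemma muPDenom_eq : muPDenom σ φ X = σ * X * (1 - φ * X) + (X - φ) * (σ - 1 + φ * X) := by
  unfold muPDenom; ring

lemma muPDenom_pos (hσ : 1 < σ) (hφ : φ ∈ Ioo 0 1) (hX : X ∈ Icc 1 (1 / φ)) :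
    0 < muPDenom σ φ X := by
  obtain ⟨hφ0, hφ1⟩ := hφ
  have hXφ : φ * X ≤ 1 := by rw [mul_comm, ← le_div_iff₀ hφ0]; exact hX.2
  rw [muPDenom_eq]
  have : 0 ≤ σ * X * (1 - φ * X) := mul_nonneg (by nlinarith [hX.1]) (by linarith)
  nlinarith [mul_pos (by linarith [hX.1] : 0 < X - φ) (by nlinarith [hX.1] : 0 < σ - 1 + φ * X)]

lemma hasDerivAt_muP (hσ : σ ≠ 1) (hD : muPDenom σ φ X ≠ 0) :
    HasDerivAt (muP σ φ) (muPDeriv σ φ X) X := by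
  have hσ1 : σ - 1 ≠ 0 := sub_ne_zero.2 hσ
  have hnum : HasDerivAt (fun X => (2 * σ - 1) * (X - φ) * (1 - X * φ))
      ((2 * σ - 1) * (1 - X * φ) + (2 * σ - 1) * (X - φ) * -φ) X := by
    have := (((hasDerivAt_id X).sub_const φ).const_mul (2 * σ - 1)).fun_mul
      (((hasDerivAt_id X).mul_const φ).const_sub 1)
    simpa using this
  have hden : HasDerivAt (fun X => (σ - 1) * muPDenom σ φ X)
      ((σ - 1) * ((2 * σ - φ ^ 2 - 1) - (σ - 1) * φ * (2 * X))) X := by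
    have := (((hasDerivAt_id X).const_mul (2 * σ - φ ^ 2 - 1)).sub
      (((hasDerivAt_pow 2 X).add_const 1).const_mul ((σ - 1) * φ))).const_mul (σ - 1)
    simpa [muPDenom] using this
  have hbracket : (σ - 1) * (X ^ 2 + 1) * φ - 2 * σ * X + X * φ ^ 2 + X = -muPDenom σ φ X := by
    unfold muPDenom; ring
  refine (hnum.fun_div hden (mul_ne_zero hσ1 hD)).congr_deriv ?_
  rw [muPDeriv, hbracket, div_eq_div_iff (by positivity) (by simp [hσ1, hD])]
  unfold muPDenom
  ring

lemma muPDeriv_neg (hσ : 1 < σ) (hφ : φ ∈ Ioo 0 1) (hX : 1 < X) (hD : muPDenom σ φ X ≠ 0) :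
    muPDeriv σ φ X < 0 := by
  obtain ⟨hφ0, hφ1⟩ := hφ
  have hbracket : (σ - 1) * (X ^ 2 + 1) * φ - 2 * σ * X + X * φ ^ 2 + X ≠ 0 := by
    contrapose! hD; unfold muPDenom; linarith
  have hnum : σ * (2 * σ - 1) * (X ^ 2 - 1) * φ * (1 - φ ^ 2) > 0 := by
    have : 0 < X ^ 2 - 1 := by nlinarith
    have : 0 < 1 - φ ^ 2 := by nlinarith
    have : 0 < 2 * σ - 1 := by linarith
    positivity
  refine div_neg_of_neg_of_pos (by linarith) ?_
  have : 0 < σ - 1 := by linarith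
  positivity

lemma continuousAt_muP (hσ : σ ≠ 1) (hD : muPDenom σ φ X ≠ 0) : ContinuousAt (muP σ φ) X :=
  (hasDerivAt_muP hσ hD).continuousAt

lemma strictAntiOn_muP (hσ : 1 < σ) (hφ : φ ∈ Ioo 0 1) :
    StrictAntiOn (muP σ φ) (Icc 1 (1 / φ)) := by
  apply strictAntiOn_of_deriv_neg (convex_Icc _ _)
  · exact fun X hX => (continuousAt_muP hσ.ne' (muPDenom_pos hσ hφ hX).ne').continuousWithinAt
  · rw [interior_Icc]
    intro X hX
    have hD := (muPDenom_pos hσ hφ (Ioo_subset_Icc_self hX)).ne'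
    rw [(hasDerivAt_muP hσ.ne' hD).deriv]
    exact muPDeriv_neg hσ hφ hX.1 hD

lemma muP_one (hφ : φ ≠ 1) :
    muP σ φ 1 = (2 * σ - 1) * (1 - φ) / ((σ - 1) * (2 * σ + φ - 1)) := by
  have h1φ : 1 - φ ≠ 0 := sub_ne_zero.2 (Ne.symm hφ)
  have : muP σ φ 1 = (2 * σ - 1) * (1 - φ) * (1 - φ) / ((σ - 1) * (2 * σ + φ - 1) * (1 - φ)) := by
    unfold muP muPDenom; congr 1 <;> ring
  rw [this, mul_div_mul_right _ _ h1φ]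

lemma muP_one_div (hφ : φ ≠ 0) : muP σ φ (1 / φ) = 0 := by
  simp [muP, hφ]

end StabilityThreshold

end

open StabilityThreshold in
/-- let `σ > 1`, `φ ∈ (0,1)`,
`μ_p(X) = (2σ−1)(X − φ)(1 − Xφ)/[(σ−1)((2σ − φ² − 1)X − (σ−1)φ(X² + 1))]` and
`μ_d = (2σ−1)(1−φ)/[(σ−1)(2σ+φ−1)]`.  Then (a) `μ_p` is strictly decreasing on
`(1, 1/φ)`, with derivative `σ(2σ−1)(X²−1)φ(φ²−1)/{(σ−1)[(σ−1)(X²+1)φ − 2σX + Xφ² + X]²} < 0`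
at each `X` there; (b) `μ_p(1) = μ_d` and `μ_p(X) → 0` as `X → (1/φ)⁻`; hence
(c) `0 < μ_p(X) < μ_d` for every `X ∈ (1, 1/φ)`. -/
theorem stmt_17 (σ φ : ℝ) (hσ : 1 < σ) (hφ : φ ∈ Set.Ioo (0 : ℝ) 1)
    (μp : ℝ → ℝ)
    (hμp : μp = fun X : ℝ =>
      (2 * σ - 1) * (X - φ) * (1 - X * φ) /
        ((σ - 1) * ((2 * σ - φ ^ 2 - 1) * X - (σ - 1) * φ * (X ^ 2 + 1))))
    (μd : ℝ) (hμd : μd = (2 * σ - 1) * (1 - φ) / ((σ - 1) * (2 * σ + φ - 1))) :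
    (StrictAntiOn μp (Set.Ioo (1 : ℝ) (1 / φ)) ∧
      ∀ X ∈ Set.Ioo (1 : ℝ) (1 / φ),
        HasDerivAt μp
          (σ * (2 * σ - 1) * (X ^ 2 - 1) * φ * (φ ^ 2 - 1) /
            ((σ - 1) * ((σ - 1) * (X ^ 2 + 1) * φ - 2 * σ * X + X * φ ^ 2 + X) ^ 2)) X ∧
        σ * (2 * σ - 1) * (X ^ 2 - 1) * φ * (φ ^ 2 - 1) /
            ((σ - 1) * ((σ - 1) * (X ^ 2 + 1) * φ - 2 * σ * X + X * φ ^ 2 + X) ^ 2) < 0) ∧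
    (μp 1 = μd ∧ Tendsto μp (𝓝[<] (1 / φ)) (𝓝 0)) ∧
    (∀ X ∈ Set.Ioo (1 : ℝ) (1 / φ), 0 < μp X ∧ μp X < μd) := by
  obtain rfl : μp = muP σ φ := hμp
  have h1φ : (1 : ℝ) < 1 / φ := by rw [lt_div_iff₀ hφ.1]; linarith [hφ.2]
  have hanti := strictAntiOn_muP hσ hφ
  have hD : ∀ X ∈ Icc 1 (1 / φ), muPDenom σ φ X ≠ 0 := fun X hX => (muPDenom_pos hσ hφ hX).ne'
  have hone : muP σ φ 1 = μd := hμd ▸ muP_one hφ.2.ne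
  have hend : muP σ φ (1 / φ) = 0 := muP_one_div hφ.1.ne'
  have hleft : (1 : ℝ) ∈ Icc 1 (1 / φ) := ⟨le_rfl, h1φ.le⟩
  have hright : 1 / φ ∈ Icc 1 (1 / φ) := ⟨h1φ.le, le_rfl⟩
  refine ⟨⟨hanti.mono Ioo_subset_Icc_self, fun X hX => ?_⟩, ⟨hone, ?_⟩, fun X hX => ?_⟩
  · have hDX := hD X (Ioo_subset_Icc_self hX)
    exact ⟨hasDerivAt_muP hσ.ne' hDX, muPDeriv_neg hσ hφ hX.1 hDX⟩
  · rw [← hend]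
    exact (continuousAt_muP hσ.ne' (hD _ hright)).tendsto.mono_left nhdsWithin_le_nhds
  · have hXmem := Ioo_subset_Icc_self hX
    exact ⟨hend ▸ hanti hXmem hright hX.2, hone ▸ hanti hleft hXmem hX.1⟩
end

section
/- Let 0 < μ < 1 and σ ∈ (2, (μ+1)/μ), and set φ_b = (2σ−1)·[μ(σ−1) − 1] / [−(μ+2)σ + μ + 1]. Then: (a) φ_b ∈ (0,1); and (b) 16·(σ−2)·(2σ−3)·(1−φ_b)³·((1+φ_b)/2)^{1/(σ−1)} / [(σ−1)³·(1+φ_b)³] − 32μ < 0. (Under Logit preferences with θ = 0, the third derivative ∂³ΔV/∂h³ at the bifurcation point (1/2, φ_b) is negative, so the pitchfork bifurcation in the freeness of trade φ is supercritical.) -/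
/-!
Write `m = μ(σ-1) ∈ (0,1)`, `T = m + 2σ - 1` and `K = 2σ - 1 - m(σ-1)`. Clearing the denominator
of `φ_b` gives `T(1 - φ_b) = 2σm` and `T(1 + φ_b) = 2K`, so `(1 - φ_b)/(1 + φ_b) = σm/K` with
`K > σ`. Dropping the factor `((1+φ_b)/2)^{1/(σ-1)} < 1`, the claim reduces to
`(σ-2)(2σ-3)μ²σ³ < 2K³`, which follows from `μ²(σ-2)(2σ-3) < m · 2m < 2` and `σ³ < K³`.
-/

namespace Bifurcation

variable {μ σ φ : ℝ}

lemma denom_neg (hμ : 0 < μ) (hσ : 1 < σ) : -(μ + 2) * σ + μ + 1 < 0 := by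
  nlinarith

lemma one_sub_mul_eq (hφ : φ * (-(μ + 2) * σ + μ + 1) = (2 * σ - 1) * (μ * (σ - 1) - 1)) :
    (1 - φ) * (μ * (σ - 1) + 2 * σ - 1) = 2 * σ * (μ * (σ - 1)) := by
  linear_combination hφ

lemma one_add_mul_eq (hφ : φ * (-(μ + 2) * σ + μ + 1) = (2 * σ - 1) * (μ * (σ - 1) - 1)) :
    (1 + φ) * (μ * (σ - 1) + 2 * σ - 1) = 2 * (2 * σ - 1 - μ * (σ - 1) ^ 2) := by
  linear_combination -hφ

lemma mem_Ioo (hμ : 0 < μ) (hσ : 1 < σ) (hm : μ * (σ - 1) < 1)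
    (hφ : φ * (-(μ + 2) * σ + μ + 1) = (2 * σ - 1) * (μ * (σ - 1) - 1)) :
    φ ∈ Set.Ioo 0 1 := by
  have hT : 0 < μ * (σ - 1) + 2 * σ - 1 := by nlinarith
  have hφT : φ * (μ * (σ - 1) + 2 * σ - 1) = (2 * σ - 1) * (1 - μ * (σ - 1)) := by
    linear_combination -hφ
  have hsub := one_sub_mul_eq hφ
  have hφT_pos : 0 < φ * (μ * (σ - 1) + 2 * σ - 1) := by rw [hφT]; nlinarith
  have hsub_pos : 0 < (1 - φ) * (μ * (σ - 1) + 2 * σ - 1) := by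
    rw [hsub]
    have : 0 < σ - 1 := by linarith
    positivity
  exact ⟨pos_of_mul_pos_left hφT_pos hT.le, sub_pos.mp (pos_of_mul_pos_left hsub_pos hT.le)⟩

lemma sq_mul_lt_two (hμ : 0 < μ) (hσ : 2 < σ) (hm : μ * (σ - 1) < 1) :
    μ ^ 2 * ((σ - 2) * (2 * σ - 3)) < 2 := by
  have h₁ : μ * (σ - 2) < 1 := by nlinarith
  have h₂ : μ * (2 * σ - 3) < 2 := by nlinarith
  have h₁' : 0 < μ * (σ - 2) := by nlinarith
  calc μ ^ 2 * ((σ - 2) * (2 * σ - 3)) = (μ * (σ - 2)) * (μ * (2 * σ - 3)) := by ring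
    _ < 1 * 2 := mul_lt_mul'' h₁ h₂ h₁'.le (by nlinarith)
    _ = 2 := by norm_num

lemma cube_lt_cube (hσ : 1 < σ) (hm : μ * (σ - 1) < 1) :
    σ ^ 3 < (2 * σ - 1 - μ * (σ - 1) ^ 2) ^ 3 := by
  have hK : σ < 2 * σ - 1 - μ * (σ - 1) ^ 2 := by nlinarith
  exact pow_lt_pow_left₀ hK (by linarith) (by norm_num)

lemma one_sub_cube_lt (hμ : 0 < μ) (hσ : 2 < σ) (hm : μ * (σ - 1) < 1)
    (hφ : φ * (-(μ + 2) * σ + μ + 1) = (2 * σ - 1) * (μ * (σ - 1) - 1)) :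
    (σ - 2) * (2 * σ - 3) * (1 - φ) ^ 3 < 2 * μ * (σ - 1) ^ 3 * (1 + φ) ^ 3 := by
  set K := 2 * σ - 1 - μ * (σ - 1) ^ 2
  have hT : 0 < μ * (σ - 1) + 2 * σ - 1 := by nlinarith
  have hK : 0 < K := by nlinarith
  have hratio : (1 - φ) * K = σ * (μ * (σ - 1)) * (1 + φ) := by
    refine mul_right_cancel₀ hT.ne' ?_
    linear_combination K * one_sub_mul_eq hφ - σ * (μ * (σ - 1)) * one_add_mul_eq hφ
  have hφpos : 0 < 1 + φ := by linarith [(mem_Ioo hμ (by linarith) hm hφ).1]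
  have hc : 0 < μ * (σ - 1) ^ 3 * (1 + φ) ^ 3 := by
    have : 0 < σ - 1 := by linarith
    positivity
  have hpoly : μ ^ 2 * ((σ - 2) * (2 * σ - 3)) * σ ^ 3 < 2 * K ^ 3 := by
    have hσ3 : 0 < σ ^ 3 := pow_pos (by linarith) 3
    nlinarith [sq_mul_lt_two hμ hσ hm, cube_lt_cube (by linarith) hm]
  refine lt_of_mul_lt_mul_right ?_ (pow_pos hK 3).le
  calc (σ - 2) * (2 * σ - 3) * (1 - φ) ^ 3 * K ^ 3
      = μ * (σ - 1) ^ 3 * (1 + φ) ^ 3 * (μ ^ 2 * ((σ - 2) * (2 * σ - 3)) * σ ^ 3) := by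
        rw [mul_assoc, ← mul_pow, hratio]; ring
    _ < μ * (σ - 1) ^ 3 * (1 + φ) ^ 3 * (2 * K ^ 3) := mul_lt_mul_of_pos_left hpoly hc
    _ = 2 * μ * (σ - 1) ^ 3 * (1 + φ) ^ 3 * K ^ 3 := by ring

end Bifurcation

theorem stmt_19_general (μ σ : ℝ) (hμ0 : 0 < μ)
    (hσ : σ ∈ Set.Ioo (2 : ℝ) ((μ + 1) / μ))
    (φb : ℝ)
    (hφb : φb = (2 * σ - 1) * (μ * (σ - 1) - 1) / (-(μ + 2) * σ + μ + 1)) :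
    φb ∈ Set.Ioo (0 : ℝ) 1 ∧
    16 * (σ - 2) * (2 * σ - 3) * (1 - φb) ^ 3 * ((1 + φb) / 2) ^ (1 / (σ - 1)) /
        ((σ - 1) ^ 3 * (1 + φb) ^ 3) - 32 * μ < 0 := by
  obtain ⟨hσ2, hσμ⟩ := hσ
  have hσ1 : 1 < σ := by linarith
  have hm : μ * (σ - 1) < 1 := by nlinarith [(lt_div_iff₀ hμ0).mp hσμ]
  have hφ := (eq_div_iff (Bifurcation.denom_neg hμ0 hσ1).ne).mp hφb
  obtain ⟨hφ0, hφ1⟩ := Bifurcation.mem_Ioo hμ0 hσ1 hm hφ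
  refine ⟨⟨hφ0, hφ1⟩, ?_⟩
  have hC : ((1 + φb) / 2) ^ (1 / (σ - 1)) < 1 :=
    Real.rpow_lt_one (by linarith) (by linarith) (one_div_pos.mpr (by linarith))
  have hP : 0 < 16 * (σ - 2) * (2 * σ - 3) * (1 - φb) ^ 3 := by
    have : 0 < 1 - φb := by linarith
    have : 0 < σ - 2 := by linarith
    have : 0 < 2 * σ - 3 := by linarith
    positivity
  have hQ : 0 < (σ - 1) ^ 3 * (1 + φb) ^ 3 := by
    have : 0 < σ - 1 := by linarith
    have : 0 < 1 + φb := by linarith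
    positivity
  rw [sub_neg, div_lt_iff₀ hQ]
  calc 16 * (σ - 2) * (2 * σ - 3) * (1 - φb) ^ 3 * ((1 + φb) / 2) ^ (1 / (σ - 1))
      < 16 * (σ - 2) * (2 * σ - 3) * (1 - φb) ^ 3 := mul_lt_of_lt_one_right hP hC
    _ < 32 * μ * ((σ - 1) ^ 3 * (1 + φb) ^ 3) := by
      linarith [Bifurcation.one_sub_cube_lt hμ0 hσ2 hm hφ]

/-- let `0 < μ < 1`, `σ ∈ (2, (μ+1)/μ)` and
`φ_b = (2σ−1)[μ(σ−1) − 1]/[−(μ+2)σ + μ + 1]`.  Then (a) `φ_b ∈ (0,1)`, and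
(b) `16(σ−2)(2σ−3)(1−φ_b)³((1+φ_b)/2)^{1/(σ−1)}/[(σ−1)³(1+φ_b)³] − 32μ < 0`. -/
theorem stmt_19 (μ σ : ℝ) (hμ0 : 0 < μ) (hμ1 : μ < 1)
    (hσ : σ ∈ Set.Ioo (2 : ℝ) ((μ + 1) / μ))
    (φb : ℝ)
    (hφb : φb = (2 * σ - 1) * (μ * (σ - 1) - 1) / (-(μ + 2) * σ + μ + 1)) :
    φb ∈ Set.Ioo (0 : ℝ) 1 ∧
    16 * (σ - 2) * (2 * σ - 3) * (1 - φb) ^ 3 * ((1 + φb) / 2) ^ (1 / (σ - 1)) /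
        ((σ - 1) ^ 3 * (1 + φb) ^ 3) - 32 * μ < 0 :=
  stmt_19_general μ σ hμ0 hσ φb hφb
end
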